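/- Let (H,v) be a rooted finite simple graph. Then for any integers k ≥ 0 and g ≥ 1, X_{P^k(K_g,H)} = (g−1)! · Σ_{l=0}^{g−1} (1−l) · e_l · X_{H^{k+g−1−l}}. -/

import Mathlib

noncomputable section
open scoped Classical

/-- The chromatic symmetric function of a simple graph `G`, as a formal power
series over `ℚ` in countably many commuting variables indexed by the colors `ℕ`.
The coefficient of the monomial `∏ i, xᵢ ^ d i` is the number of proper
colorings `κ : V → ℕ` whose class of color `i` has exactly `d i` vertices. -/
def csf {V : Type} (G : SimpleGraph V) : MvPowerSeries ℕ ℚ :=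
  fun d : ℕ →₀ ℕ =>
    (Nat.card {κ : V → ℕ // (∀ a b : V, G.Adj a b → κ a ≠ κ b) ∧
        ∀ i : ℕ, Nat.card {v : V // κ v = i} = d i} : ℚ)

/-- The elementary symmetric function `eₖ`, as a formal power series:
the sum of all squarefree monomials of degree `k`. -/
def esymm (k : ℕ) : MvPowerSeries ℕ ℚ :=
  fun d : ℕ →₀ ℕ => if (∀ i, d i ≤ 1) ∧ d.support.card = k then 1 else 0

/-- `e_I = e_{i₁} ⋯ e_{i_l}` for a composition recorded as a list. -/
def eList (I : List ℕ) : MvPowerSeries ℕ ℚ := (I.map esymm).prod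

/-- The disjoint union of two simple graphs. -/
def disjSum {α β : Type} (G : SimpleGraph α) (H : SimpleGraph β) :
    SimpleGraph (α ⊕ β) where
  Adj x y := (∃ a b, G.Adj a b ∧ x = Sum.inl a ∧ y = Sum.inl b) ∨
             (∃ a b, H.Adj a b ∧ x = Sum.inr a ∧ y = Sum.inr b)
  symm := ⟨by
    rintro x y (⟨a, b, h, rfl, rfl⟩ | ⟨a, b, h, rfl, rfl⟩)
    · exact Or.inl ⟨b, a, h.symm, rfl, rfl⟩
    · exact Or.inr ⟨b, a, h.symm, rfl, rfl⟩⟩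
  loopless := ⟨by
    rintro x (⟨a, b, h, rfl, hy⟩ | ⟨a, b, h, rfl, hy⟩) <;>
      · cases hy
        exact h.ne rfl⟩

/-- The quotient of a simple graph obtained by identifying vertices along the
equivalence relation generated by `r`; identified vertices are joined by an
edge in the quotient iff some pair of their representatives were adjacent. -/
def glue {α : Type} (G : SimpleGraph α) (r : α → α → Prop) :
    SimpleGraph (Quotient (Relation.EqvGen.setoid r)) where
  Adj x y := x ≠ y ∧ ∃ a b, G.Adj a b ∧ Quotient.mk _ a = x ∧ Quotient.mk _ b = y
  symm := ⟨by
    rintro x y ⟨hne, a, b, hab, rfl, rfl⟩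
    exact ⟨hne.symm, b, a, hab.symm, rfl, rfl⟩⟩
  loopless := ⟨fun x h => h.1 rfl⟩

/-- A rooted finite simple graph. -/
structure PtGraph : Type 1 where
  V : Type
  fin : Finite V
  graph : SimpleGraph V
  root : V

attribute [instance] PtGraph.fin

/-- The chromatic symmetric function of a rooted graph. -/
def PtGraph.csf (G : PtGraph) : MvPowerSeries ℕ ℚ := _root_.csf G.graph

/-- The rooted one-vertex graph `K₁`. -/
def PtGraph.K1 : PtGraph := ⟨PUnit, inferInstance, ⊥, PUnit.unit⟩

/-- The identifications performed when conjoining two rooted graphs by a path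
of length `k`: the first end of a path with `k+1` vertices is glued to the
root of `G` and the last end to the root of `H`. -/
def pcRel (k : ℕ) (G H : PtGraph) :
    (G.V ⊕ (Fin (k + 1) ⊕ H.V)) → (G.V ⊕ (Fin (k + 1) ⊕ H.V)) → Prop :=
  fun x y =>
    (x = Sum.inl G.root ∧ y = Sum.inr (Sum.inl 0)) ∨
    (x = Sum.inr (Sum.inl (Fin.last k)) ∧ y = Sum.inr (Sum.inr H.root))

/-- The path-conjoined graph `P^k(G,H)` of two rooted graphs `(G,u)`, `(H,v)`:
take the disjoint union of `G`, a path with `k+1` vertices and `H`, and glue the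
two ends of the path to `u` and to `v` respectively. (For `k = 0` the two roots
get identified.)  The resulting graph is rooted at (the image of) `v`. -/
def pathConjoin (k : ℕ) (G H : PtGraph) : PtGraph where
  V := Quotient (Relation.EqvGen.setoid (pcRel k G H))
  fin := inferInstance
  graph := glue (disjSum G.graph (disjSum (SimpleGraph.pathGraph (k + 1)) H.graph))
      (pcRel k G H)
  root := Quotient.mk _ (Sum.inr (Sum.inr H.root))

/-- The tailed graph `G^k = P^k(G, K₁)`. -/
def PtGraph.tail (G : PtGraph) (k : ℕ) : PtGraph := pathConjoin k G PtGraph.K1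

/-- The same graph with a new root. -/
def PtGraph.reroot (G : PtGraph) (w : G.V) : PtGraph := ⟨G.V, G.fin, G.graph, w⟩

/-- The spider-conjoined graph `S^τ(G₁, …, G_l)`: each rooted graph `Gᵢ` is
joined to a common center vertex by a path of length `τᵢ`.  The legs are
recorded as a list of pairs `(τᵢ, Gᵢ)`; the result is rooted at the center. -/
def spiderConjoin (legs : List (ℕ × PtGraph)) : PtGraph :=
  legs.foldr (fun p C => pathConjoin p.1 p.2 C) PtGraph.K1

/-- The 2-chain-conjoined graph `C^{gh}(G, M, H)` where the middle graph `M`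
has the two (distinct) roots `x` and `y`: a path of length `g` joins the root
of `G` to `x`, and a path of length `h` joins `y` to the root of `H`. -/
def chain2 (g h : ℕ) (G : PtGraph) {μ : Type} (finμ : Finite μ)
    (M : SimpleGraph μ) (x y : μ) (H : PtGraph) : PtGraph :=
  pathConjoin h ((pathConjoin g G ⟨μ, finμ, M, x⟩).reroot
    (Quotient.mk _ (Sum.inr (Sum.inr y)))) H

/-- The complete graph `K_m` as a rooted graph (on the vertex set
`Option (Fin (m-1))`, which has `m` elements for `m ≥ 1`), rooted at `none`. -/
def ptClique (m : ℕ) : PtGraph := ⟨Option (Fin (m - 1)), inferInstance, ⊤, none⟩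

/-- The cycle `Cₙ` on `Fin n`: `i` is adjacent to `i ± 1 (mod n)`.
For `n = 2` this is the complete graph `K₂`. -/
def cycAdj (n : ℕ) : SimpleGraph (Fin n) :=
  SimpleGraph.fromRel fun i j => ((i : ℕ) + 1) % n = (j : ℕ)

/-- The cycle `C_m` as a rooted graph (the vertex type `Fin (m - 1 + 1)` is
`Fin m` for `m ≥ 1` and is always nonempty), rooted at `0`. -/
def ptCycle (m : ℕ) : PtGraph :=
  ⟨Fin (m - 1 + 1), inferInstance, cycAdj (m - 1 + 1), 0⟩

/-- The finite set of all compositions of `n`, recorded as lists of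
positive integers summing to `n`. -/
def compositions : ℕ → Finset (List ℕ)
  | 0 => {([] : List ℕ)}
  | n + 1 =>
      (Finset.range (n + 1)).attach.biUnion fun k =>
        (compositions k.1).image fun I => (n + 1 - k.1) :: I
  decreasing_by exact Finset.mem_range.mp k.2

/-- `w_I = i₁ (i₂ - 1) (i₃ - 1) ⋯ (i_l - 1)`, with `w` of the empty
composition equal to `1`. -/
def wcomp : List ℕ → ℚ
  | [] => 1
  | a :: t => (a : ℚ) * (t.map fun i => (i : ℚ) - 1).prod

/-- `σ_I(a) = min { i₁ + ⋯ + i_k : 0 ≤ k ≤ ℓ(I), i₁ + ⋯ + i_k ≥ a }`. -/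
def sigmaComp (I : List ℕ) (a : ℕ) : ℕ :=
  ((((List.range (I.length + 1)).map fun k => (I.take k).sum).filter
    fun s => a ≤ s).foldr min I.sum)

/-- The `a`-surplus `Θ_I(a) = σ_I(a) - a` of a composition. -/
def thetaComp (I : List ℕ) (a : ℕ) : ℕ := sigmaComp I a - a

/-!
Write `G_k` for `H` with a pendant path of length `k` attached at its root and ending in `w_k`,
and `K(G, v, s)` for `G` with a clique `K_{s+1}` glued along the vertex `v`. Then
`P^k(K_g, H) ≅ K(G_k, w_k, g - 1)` and `H^k ≅ G_k`.

Giving the `s` new clique vertices of `K(G, v, s)` distinct colours shows that its coefficient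
of `x^d` is `s!` times the number of pairs `(κ, S)` of a proper colouring `κ` of `G` and an
`s`-set `S` of further colours with `κ(v) ∉ S` and colour multiset `κ + S = d`; without the
condition `κ(v) ∉ S` these pairs are counted by `e_s X_G`. Moving the colour of the last
vertex of `G_{k+1}` into `S` relates the counts for `G_{k+1}` and `G_k`, which gives
`X_{K(G_k, s+1)} = (s+1) X_{K(G_{k+1}, s)} - s (s+1)! e_{s+1} X_{G_k}`.
Unrolling this recurrence in `s` gives the formula.
-/

open Sum

namespace SimpleGraph

variable {α β : Type}

lemma map_sup (f : α → β) (G G' : SimpleGraph α) :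
    (G ⊔ G').map f = G.map f ⊔ G'.map f := by
  ext x y
  simp only [map_adj', sup_adj]
  grind

lemma map_bot (f : α → β) : (⊥ : SimpleGraph α).map f = ⊥ := by
  ext x y
  simp [map_adj']

lemma map_edge (f : α → β) (a b : α) : (edge a b).map f = edge (f a) (f b) := by
  ext x y
  simp only [map_adj', edge_adj]
  constructor
  · rintro ⟨hxy, u, w, ⟨huw | huw, -⟩, rfl, rfl⟩ <;> obtain ⟨rfl, rfl⟩ := huw <;>
      simp_all
  · rintro ⟨hxy | hxy, hne⟩ <;> obtain ⟨rfl, rfl⟩ := hxy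
    · exact ⟨hne, a, b, ⟨Or.inl ⟨rfl, rfl⟩, fun h => hne (h ▸ rfl)⟩, rfl, rfl⟩
    · exact ⟨hne, b, a, ⟨Or.inr ⟨rfl, rfl⟩, fun h => hne (h ▸ rfl)⟩, rfl, rfl⟩

lemma glue_eq_map (G : SimpleGraph α) (r : α → α → Prop) :
    glue G r = G.map (Quotient.mk _) := rfl

lemma disjSum_eq_sup (G : SimpleGraph α) (G' : SimpleGraph β) :
    disjSum G G' = G.map inl ⊔ G'.map inr := by
  ext x y
  simp only [disjSum, sup_adj, map_adj']
  grind [Adj.ne]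

lemma pathGraph_map_rev (n : ℕ) : (pathGraph n).map Fin.rev = pathGraph n := by
  ext u v
  simp only [map_adj']
  constructor
  · rintro ⟨-, a, b, h, rfl, rfl⟩
    rw [pathGraph_adj] at h ⊢
    simp only [Fin.val_rev]
    omega
  · intro h
    refine ⟨h.ne, u.rev, v.rev, ?_, Fin.rev_rev u, Fin.rev_rev v⟩
    rw [pathGraph_adj] at h ⊢
    simp only [Fin.val_rev]
    omega

lemma pathGraph_succ (n : ℕ) :
    pathGraph (n + 2) =
      (pathGraph (n + 1)).map Fin.castSuccEmb ⊔
        edge (Fin.last n).castSucc (Fin.last (n + 1)) := by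
  ext u v
  rw [sup_adj, map_adj]
  induction u using Fin.lastCases <;> induction v using Fin.lastCases <;>
    simp [edge_adj, pathGraph_adj, Fin.castSucc_ne_last, (Fin.castSucc_ne_last _).symm]
    <;> rw [Fin.ext_iff, Fin.val_last] <;> omega

variable {V W : Type} (G : SimpleGraph V) (v : V)

def attachClique (s : ℕ) : SimpleGraph (V ⊕ Fin s) :=
  G.map inl ⊔ (⊤ : SimpleGraph (Option (Fin s))).map (fun o => o.elim (inl v) inr)

def addLeaf : SimpleGraph (Option V) := G.map some ⊔ edge (some v) none

lemma attachClique_zero : G.attachClique v 0 = G.map inl := by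
  ext x y
  simp only [attachClique, sup_adj, map_adj', or_iff_left_iff_imp]
  rintro ⟨-, a, b, hab, -⟩
  exact (hab.ne (Subsingleton.elim a b)).elim

lemma attachClique_map_equiv (e : V ≃ W) (s : ℕ) :
    (G.map e).attachClique (e v) s =
      (G.attachClique v s).map (Equiv.sumCongr e (Equiv.refl _)) := by
  have hclique : Equiv.sumCongr e (Equiv.refl (Fin s)) ∘
      (fun o : Option (Fin s) => o.elim (inl v) inr) = fun o => o.elim (inl (e v)) inr := by
    funext o
    cases o <;> rfl
  rw [attachClique, attachClique, map_sup, map_map, map_map, map_map, hclique]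
  rfl

variable {G v} {s : ℕ}

@[simp] lemma attachClique_adj_inl_inl {a b : V} :
    (G.attachClique v s).Adj (inl a) (inl b) ↔ G.Adj a b := by
  simpa [attachClique, map_adj', Option.exists] using Adj.ne

@[simp] lemma attachClique_adj_inl_inr {a : V} {i : Fin s} :
    (G.attachClique v s).Adj (inl a) (inr i) ↔ a = v := by
  simp [attachClique, map_adj', Option.exists, eq_comm]

@[simp] lemma attachClique_adj_inr_inl {a : V} {i : Fin s} :
    (G.attachClique v s).Adj (inr i) (inl a) ↔ a = v := by
  rw [adj_comm, attachClique_adj_inl_inr]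

@[simp] lemma attachClique_adj_inr_inr {i j : Fin s} :
    (G.attachClique v s).Adj (inr i) (inr j) ↔ i ≠ j := by
  simp [attachClique, map_adj', Option.exists]

@[simp] lemma addLeaf_adj_some_some {a b : V} :
    (G.addLeaf v).Adj (some a) (some b) ↔ G.Adj a b := by
  simpa [addLeaf, map_adj', edge_adj] using Adj.ne

@[simp] lemma addLeaf_adj_some_none {a : V} : (G.addLeaf v).Adj (some a) none ↔ a = v := by
  simp [addLeaf, map_adj', edge_adj]

@[simp] lemma addLeaf_adj_none_some {a : V} : (G.addLeaf v).Adj none (some a) ↔ a = v := by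
  rw [adj_comm, addLeaf_adj_some_none]

end SimpleGraph

lemma card_eq_sum_card_fiber {α β : Type} [Finite α] [Fintype β] (f : α → β) :
    Nat.card α = ∑ b, Nat.card {a // f a = b} := by
  rw [← Nat.card_sigma]
  exact Nat.card_congr (Equiv.sigmaFiberEquiv f).symm

lemma card_equiv_fin_finset {α : Type} {s : ℕ} (S : Finset α) (h : S.card = s) :
    Nat.card (Fin s ≃ S) = s.factorial := by
  rw [Nat.card_eq_fintype_card, Fintype.card_equiv (Fintype.equivOfCardEq (by simp [h])),
    Fintype.card_fin]

lemma image_coe_equiv {α : Type} [DecidableEq α] {s : ℕ} {S : Finset α} (σ : Fin s ≃ S) :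
    Finset.univ.image (fun x => (σ x : α)) = S := by
  ext i
  simp only [Finset.mem_image, Finset.mem_univ, true_and]
  exact ⟨fun ⟨x, hx⟩ => hx ▸ (σ x).2, fun hi => ⟨σ.symm ⟨i, hi⟩, by simp⟩⟩

lemma ite_mem_insert {α : Type} [DecidableEq α] {x : α} {S : Finset α} (hx : x ∉ S) (i : α) :
    (if i ∈ insert x S then 1 else 0) = (if x = i then 1 else 0) + if i ∈ S then 1 else 0 := by
  by_cases h : x = i
  · subst h
    simp [hx]
  · simp [h, Ne.symm h]

lemma Finsupp.ite_mem_support {α : Type} [DecidableEq α] {f : α →₀ ℕ} {i : α}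
    (h : f i ≤ 1) : (if i ∈ f.support then 1 else 0) = f i := by
  split_ifs with hi
  · have := Finsupp.mem_support_iff.1 hi
    omega
  · exact (Finsupp.notMem_support_iff.1 hi).symm

lemma Finset.toFinsupp_val_apply (S : Finset ℕ) (i : ℕ) :
    Multiset.toFinsupp S.val i = if i ∈ S then 1 else 0 := by
  simp [Multiset.toFinsupp_apply, Multiset.count_eq_of_nodup S.nodup]

section Colorings

variable {V W : Type}

def colorCount (κ : V → ℕ) (i : ℕ) : ℕ := Nat.card {v // κ v = i}

def IsProperColoring (G : SimpleGraph V) (κ : V → ℕ) : Prop :=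
  ∀ a b, G.Adj a b → κ a ≠ κ b

abbrev Colorings (G : SimpleGraph V) (d : ℕ →₀ ℕ) : Type :=
  {κ : V → ℕ // IsProperColoring G κ ∧ ∀ i, colorCount κ i = d i}

lemma csf_apply (G : SimpleGraph V) (d : ℕ →₀ ℕ) : csf G d = Nat.card (Colorings G d) := rfl

lemma colorCount_comp_equiv (κ : V → ℕ) (e : W ≃ V) (i : ℕ) :
    colorCount (κ ∘ e) i = colorCount κ i :=
  Nat.card_congr (e.subtypeEquiv fun _ => Iff.rfl)

lemma colorCount_sum [Finite V] [Finite W] (κ : V ⊕ W → ℕ) (i : ℕ) :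
    colorCount κ i = colorCount (κ ∘ inl) i + colorCount (κ ∘ inr) i := by
  rw [colorCount, Nat.card_congr Equiv.subtypeSum, Nat.card_sum]
  rfl

lemma colorCount_option [Finite V] (κ : Option V → ℕ) (i : ℕ) :
    colorCount κ i = colorCount (κ ∘ some) i + if κ none = i then 1 else 0 := by
  rw [← colorCount_comp_equiv κ (Equiv.optionEquivSumPUnit.{0} V).symm, colorCount_sum]
  congr 1
  split_ifs with h
  · exact Nat.card_eq_one_iff_unique.2 ⟨⟨fun _ _ => Subtype.ext rfl⟩, ⟨⟨.unit, h⟩⟩⟩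
  · exact @Nat.card_of_isEmpty _ ⟨fun u => h u.2⟩

lemma colorCount_of_injective [Fintype V] {κ : V → ℕ} (hκ : Function.Injective κ) (i : ℕ) :
    colorCount κ i = if i ∈ Finset.univ.image κ then 1 else 0 := by
  split_ifs with h
  · obtain ⟨v, -, rfl⟩ := Finset.mem_image.1 h
    have : Unique {w // κ w = κ v} := ⟨⟨⟨v, rfl⟩⟩, fun w => Subtype.ext (hκ w.2)⟩
    exact Nat.card_unique
  · have : IsEmpty {w // κ w = i} :=
      ⟨fun w => h (w.2 ▸ Finset.mem_image_of_mem κ (Finset.mem_univ w.1))⟩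
    exact Nat.card_of_isEmpty

lemma colorCount_pos [Finite V] (κ : V → ℕ) (v : V) : 0 < colorCount κ (κ v) :=
  have : Nonempty {w // κ w = κ v} := ⟨⟨v, rfl⟩⟩
  Nat.card_pos

lemma Colorings.mem_support [Finite V] {G : SimpleGraph V} {d : ℕ →₀ ℕ} (κ : Colorings G d)
    (v : V) : κ.1 v ∈ d.support := by
  have := colorCount_pos κ.1 v
  rw [κ.2.2] at this
  exact Finsupp.mem_support_iff.2 this.ne'

instance [Finite V] {G : SimpleGraph V} {d : ℕ →₀ ℕ} : Finite (Colorings G d) :=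
  Finite.of_injective (fun κ v => (⟨κ.1 v, κ.mem_support v⟩ : d.support))
    fun _ _ h => Subtype.ext (funext fun v => congrArg Subtype.val (congrFun h v))

lemma csf_congr {G : SimpleGraph V} {G' : SimpleGraph W} (φ : G ≃g G') : csf G = csf G' := by
  funext d
  rw [csf_apply, csf_apply, Nat.card_congr]
  refine Equiv.subtypeEquiv
    ⟨(· ∘ φ.symm), (· ∘ φ), fun _ => by ext; simp, fun _ => by ext; simp⟩
    fun κ => and_congr
      ⟨fun h a b hab => h _ _ (φ.symm.map_adj_iff.2 hab), fun h a b hab => ?_⟩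
      (forall_congr' fun i => by rw [← colorCount_comp_equiv κ φ.symm.toEquiv i]; rfl)
  simpa only [Equiv.coe_fn_mk, Function.comp_apply, RelIso.symm_apply_apply]
    using h (φ a) (φ b) (φ.map_adj_iff.2 hab)

lemma csf_map_equiv (e : V ≃ W) (G : SimpleGraph V) : csf (G.map e) = csf G :=
  (csf_congr (SimpleGraph.Iso.map e G)).symm

lemma csf_attachClique_zero (G : SimpleGraph V) (v : V) : csf (G.attachClique v 0) = csf G := by
  rw [G.attachClique_zero, ← csf_map_equiv (Equiv.sumEmpty V (Fin 0)).symm G]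
  rfl

lemma csf_attachClique_map_equiv (G : SimpleGraph V) (e : V ≃ W) (v : V) (s : ℕ) :
    csf ((G.map e).attachClique (e v) s) = csf (G.attachClique v s) := by
  rw [SimpleGraph.attachClique_map_equiv, csf_map_equiv]

lemma csf_glue {α β : Type} (G : SimpleGraph α) (r : α → α → Prop) (f : α → β)
    (s : β → α) (hfs : ∀ b, f (s b) = b) (hr : ∀ a b, r a b → f a = f b)
    (hs : ∀ a, Relation.EqvGen r a (s (f a))) :
    csf (glue G r) = csf (G.map f) := by
  have hf : ∀ a b, Relation.EqvGen r a b → f a = f b := by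
    intro a b h
    induction h with
    | rel a b h => exact hr a b h
    | refl => rfl
    | symm _ _ _ ih => exact ih.symm
    | trans _ _ _ _ _ ih₁ ih₂ => exact ih₁.trans ih₂
  let e : Quotient (Relation.EqvGen.setoid r) ≃ β :=
    { toFun := Quotient.lift f hf
      invFun := fun b => Quotient.mk _ (s b)
      left_inv := Quotient.ind fun a => Quotient.sound (hs a).symm
      right_inv := hfs }
  rw [SimpleGraph.glue_eq_map, ← csf_map_equiv e, SimpleGraph.map_map]
  rfl

end Colorings

lemma esymm_zero : esymm 0 = 1 := by
  refine MvPowerSeries.ext fun d => ?_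
  rw [MvPowerSeries.coeff_one]
  change (if (∀ i, d i ≤ 1) ∧ d.support.card = 0 then (1 : ℚ) else 0) = _
  simp only [Finset.card_eq_zero, Finsupp.support_eq_empty]
  by_cases hd : d = 0 <;> simp [hd]

def esymmSplits (j : ℕ) (d : ℕ →₀ ℕ) : Finset ((ℕ →₀ ℕ) × (ℕ →₀ ℕ)) :=
  (Finset.HasAntidiagonal.antidiagonal d).filter fun p =>
    (∀ i, p.1 i ≤ 1) ∧ p.1.support.card = j

lemma mem_esymmSplits {j : ℕ} {d : ℕ →₀ ℕ} {p : (ℕ →₀ ℕ) × (ℕ →₀ ℕ)} :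
    p ∈ esymmSplits j d ↔ p.1 + p.2 = d ∧ (∀ i, p.1 i ≤ 1) ∧ p.1.support.card = j := by
  simp [esymmSplits]

lemma coeff_esymm_mul (j : ℕ) (d : ℕ →₀ ℕ) (F : MvPowerSeries ℕ ℚ) :
    MvPowerSeries.coeff d (esymm j * F) = ∑ p ∈ esymmSplits j d, MvPowerSeries.coeff p.2 F := by
  have hesymm (e : ℕ →₀ ℕ) : MvPowerSeries.coeff e (esymm j) =
      if (∀ i, e i ≤ 1) ∧ e.support.card = j then 1 else 0 := rfl
  simp_rw [MvPowerSeries.coeff_mul, hesymm, ite_mul, one_mul, zero_mul]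
  rw [← Finset.sum_filter]
  rfl

section Counting

open Finset SimpleGraph

variable {V : Type}

@[ext] structure ColoringWithSet (G : SimpleGraph V) (j : ℕ) (d : ℕ →₀ ℕ) where
  col : V → ℕ
  set : Finset ℕ
  isProper : IsProperColoring G col
  card_set : set.card = j
  count : ∀ i, colorCount col i + (if i ∈ set then 1 else 0) = d i

namespace ColoringWithSet

variable {G : SimpleGraph V} {j : ℕ} {d : ℕ →₀ ℕ}

lemma set_subset_support (q : ColoringWithSet G j d) : q.set ⊆ d.support := fun i hi => by
  have := q.count i
  rw [if_pos hi] at this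
  exact Finsupp.mem_support_iff.2 (by omega)

def split (q : ColoringWithSet G j d) : esymmSplits j d :=
  ⟨(Multiset.toFinsupp q.set.val, d - Multiset.toFinsupp q.set.val), by
    refine mem_esymmSplits.2 ⟨add_tsub_cancel_of_le fun i => ?_, fun i => ?_,
      by rw [Multiset.toFinsupp_support, val_toFinset, q.card_set]⟩ <;>
    · have := q.count i
      rw [toFinsupp_val_apply]
      split_ifs at this ⊢ <;> omega⟩

def splitFiberEquiv (p : esymmSplits j d) :
    {q : ColoringWithSet G j d // q.split = p} ≃ Colorings G p.1.2 where
  toFun q := ⟨q.1.col, q.1.isProper, fun i => by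
    have h₁ := q.1.count i
    have h₂ := congrArg (fun p : esymmSplits j d => p.1.2 i) q.2
    simp only [split, Finsupp.tsub_apply, toFinsupp_val_apply] at h₂
    split_ifs at h₁ h₂ <;> omega⟩
  invFun κ :=
    have hp := mem_esymmSplits.1 p.2
    have hsq : Multiset.toFinsupp p.1.1.support.val = p.1.1 := Finsupp.ext fun i => by
      rw [toFinsupp_val_apply, Finsupp.ite_mem_support (hp.2.1 i)]
    ⟨⟨κ.1, p.1.1.support, κ.2.1, hp.2.2, fun i => by
      rw [Finsupp.ite_mem_support (hp.2.1 i), κ.2.2 i, add_comm, ← Finsupp.add_apply, hp.1]⟩,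
      Subtype.ext (Prod.ext hsq (by simp only [split, hsq, ← hp.1, add_tsub_cancel_left]))⟩
  left_inv q := by
    refine Subtype.ext (ColoringWithSet.ext rfl ?_)
    have h := congrArg (fun p : esymmSplits j d => p.1.1.support) q.2
    simp only [split, Multiset.toFinsupp_support, val_toFinset] at h
    exact h.symm
  right_inv _ := rfl

variable [Finite V]

lemma col_mem_support (q : ColoringWithSet G j d) (v : V) : q.col v ∈ d.support := by
  have h₁ := colorCount_pos q.col v
  have h₂ := q.count (q.col v)
  exact Finsupp.mem_support_iff.2 (by omega)

instance : Finite (ColoringWithSet G j d) :=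
  Finite.of_injective
    (fun q => ((fun v => ⟨q.col v, q.col_mem_support v⟩ : V → d.support),
      (⟨q.set, mem_powerset.2 q.set_subset_support⟩ : d.support.powerset)))
    fun _ _ h => ColoringWithSet.ext
      (funext fun v => congrArg Subtype.val (congrFun (congrArg Prod.fst h) v))
      (congrArg (Subtype.val ∘ Prod.snd) h)

lemma card_eq_card_notMem_add_card_mem (v : V) :
    Nat.card (ColoringWithSet G j d) =
      Nat.card {q : ColoringWithSet G j d // q.col v ∉ q.set} +
        Nat.card {q : ColoringWithSet G j d // q.col v ∈ q.set} := by
  rw [← Nat.card_congr (Equiv.sumCompl fun q : ColoringWithSet G j d => q.col v ∈ q.set),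
    Nat.card_sum, add_comm]

end ColoringWithSet

lemma coeff_esymm_mul_csf [Finite V] (G : SimpleGraph V) (j : ℕ) (d : ℕ →₀ ℕ) :
    MvPowerSeries.coeff d (esymm j * csf G) = Nat.card (ColoringWithSet G j d) := by
  rw [coeff_esymm_mul, ← sum_coe_sort, card_eq_sum_card_fiber ColoringWithSet.split, Nat.cast_sum]
  exact sum_congr rfl fun p _ => by rw [Nat.card_congr (ColoringWithSet.splitFiberEquiv p)]; rfl

variable (G : SimpleGraph V) (v : V) {s j : ℕ} {d : ℕ →₀ ℕ}

lemma Colorings.injective_clique (κ : Colorings (G.attachClique v s) d) :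
    Function.Injective (κ.1 ∘ inr) := fun x y h => by
  by_contra hxy
  exact κ.2.1 _ _ (attachClique_adj_inr_inr.2 hxy) h

variable [Finite V]

def restrictClique (κ : Colorings (G.attachClique v s) d) :
    {q : ColoringWithSet G s d // q.col v ∉ q.set} :=
  ⟨⟨κ.1 ∘ inl, univ.image (κ.1 ∘ inr),
    fun a b h => κ.2.1 _ _ (attachClique_adj_inl_inl.2 h),
    by rw [card_image_of_injective _ (κ.injective_clique G v), card_univ, Fintype.card_fin],
    fun i => by
      rw [← κ.2.2 i, colorCount_sum κ.1, colorCount_of_injective (κ.injective_clique G v)]⟩,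
    by
      simp only [mem_image, mem_univ, true_and, not_exists]
      exact fun x h => κ.2.1 _ _ (attachClique_adj_inl_inr.2 rfl) h.symm⟩

def extendClique (q : {q : ColoringWithSet G s d // q.col v ∉ q.set}) (σ : Fin s ≃ q.1.set) :
    Colorings (G.attachClique v s) d :=
  ⟨Sum.elim q.1.col (fun x => σ x), by
    rintro (a | x) (b | y) h
    · exact q.1.isProper a b (attachClique_adj_inl_inl.1 h)
    · intro e
      change q.1.col a = σ y at e
      rw [attachClique_adj_inl_inr.1 h] at e
      exact q.2 (e ▸ (σ y).2)
    · intro e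
      change σ x = q.1.col b at e
      rw [attachClique_adj_inr_inl.1 h] at e
      exact q.2 (e ▸ (σ x).2)
    · exact fun e => attachClique_adj_inr_inr.1 h (σ.injective (Subtype.ext e)), fun i => by
    rw [colorCount_sum, Sum.elim_comp_inl, Sum.elim_comp_inr,
      colorCount_of_injective (κ := fun x => (σ x : ℕ))
        fun x y h => σ.injective (Subtype.ext h),
      image_coe_equiv, q.1.count]⟩

def restrictCliqueFiberEquiv (q : {q : ColoringWithSet G s d // q.col v ∉ q.set}) :
    {κ // restrictClique G v κ = q} ≃ (Fin s ≃ q.1.set) where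
  toFun κ := Equiv.ofBijective (fun x => ⟨κ.1.1 (inr x),
      congrArg (fun q => q.1.set) κ.2 ▸ mem_image_of_mem _ (mem_univ x)⟩) <|
    (Fintype.bijective_iff_injective_and_card _).2
      ⟨fun x y h => κ.1.injective_clique G v (congrArg Subtype.val h), by simp [q.1.card_set]⟩
  invFun σ :=
    ⟨extendClique G v q σ, Subtype.ext (ColoringWithSet.ext rfl (image_coe_equiv σ))⟩
  left_inv κ := by
    refine Subtype.ext (Subtype.ext (funext ?_))
    rintro (a | x)
    · exact congrArg (fun q => q.1.col a) κ.2.symm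
    · rfl
  right_inv _ := Equiv.ext fun _ => rfl

lemma card_colorings_attachClique (s : ℕ) (d : ℕ →₀ ℕ) :
    Nat.card (Colorings (G.attachClique v s) d) =
      s.factorial * Nat.card {q : ColoringWithSet G s d // q.col v ∉ q.set} := by
  have := Fintype.ofFinite {q : ColoringWithSet G s d // q.col v ∉ q.set}
  rw [card_eq_sum_card_fiber (restrictClique G v)]
  simp_rw [fun q => Nat.card_congr (restrictCliqueFiberEquiv G v q),
    fun q : {q : ColoringWithSet G s d // q.col v ∉ q.set} =>
      card_equiv_fin_finset q.1.set q.1.card_set]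
  rw [sum_const, card_univ, smul_eq_mul, mul_comm, Nat.card_eq_fintype_card]

def restrictLeaf (q : {q : ColoringWithSet (G.addLeaf v) j d // q.col none ∉ q.set}) :
    ColoringWithSet G (j + 1) d :=
  ⟨q.1.col ∘ some, insert (q.1.col none) q.1.set,
    fun a b h => q.1.isProper _ _ (addLeaf_adj_some_some.2 h),
    by rw [card_insert_of_notMem q.2, q.1.card_set],
    fun i => by
      have := q.1.count i
      rw [colorCount_option] at this
      rw [ite_mem_insert q.2]
      omega⟩

def extendLeaf (p : ColoringWithSet G (j + 1) d) (x : p.set.erase (p.col v)) :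
    {q : ColoringWithSet (G.addLeaf v) j d // q.col none ∉ q.set} :=
  have hx := mem_erase.1 x.2
  ⟨⟨fun o => o.elim x p.col, p.set.erase x, by
      rintro (_ | a) (_ | b) h
      · exact (h.ne rfl).elim
      · rw [addLeaf_adj_none_some.1 h]
        exact hx.1
      · rw [addLeaf_adj_some_none.1 h]
        exact hx.1.symm
      · exact p.isProper a b (addLeaf_adj_some_some.1 h),
    by rw [card_erase_of_mem hx.2, p.card_set, Nat.add_sub_cancel],
    fun i => by
      have h₁ := ite_mem_insert (notMem_erase x.1 p.set) i
      rw [insert_erase hx.2] at h₁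
      have h₂ := p.count i
      rw [colorCount_option]
      change colorCount p.col i + (if x.1 = i then 1 else 0) + _ = d i
      omega⟩, notMem_erase _ _⟩

def restrictLeafFiberEquiv (p : ColoringWithSet G (j + 1) d) :
    {q // restrictLeaf G v q = p} ≃ p.set.erase (p.col v) where
  toFun q := ⟨q.1.1.col none, by
    have hcol := congrArg ColoringWithSet.col q.2
    have hset := congrArg ColoringWithSet.set q.2
    simp only [restrictLeaf] at hcol hset
    refine mem_erase.2 ⟨?_, hset ▸ mem_insert_self _ _⟩
    rw [← hcol]
    exact q.1.1.isProper _ _ (addLeaf_adj_none_some.2 rfl)⟩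
  invFun x := ⟨extendLeaf G v p x, ColoringWithSet.ext rfl (insert_erase (mem_erase.1 x.2).2)⟩
  left_inv q := by
    have hcol := congrArg ColoringWithSet.col q.2
    have hset := congrArg ColoringWithSet.set q.2
    simp only [restrictLeaf] at hcol hset
    refine Subtype.ext (Subtype.ext (ColoringWithSet.ext (funext ?_) ?_))
    · rintro (_ | a)
      · rfl
      · exact congrFun hcol.symm a
    · exact (congrArg (·.erase (q.1.1.col none)) hset).symm.trans (erase_insert q.1.2)
  right_inv _ := rfl

lemma card_addLeaf_notMem_add_card_mem (j : ℕ) (d : ℕ →₀ ℕ) :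
    Nat.card {q : ColoringWithSet (G.addLeaf v) j d // q.col none ∉ q.set} +
      Nat.card {p : ColoringWithSet G (j + 1) d // p.col v ∈ p.set} =
    (j + 1) * Nat.card (ColoringWithSet G (j + 1) d) := by
  have := Fintype.ofFinite (ColoringWithSet G (j + 1) d)
  have hsum (p : ColoringWithSet G (j + 1) d) :
      (p.set.erase (p.col v)).card + (if p.col v ∈ p.set then 1 else 0) = j + 1 := by
    split_ifs with h
    · rw [card_erase_add_one h, p.card_set]
    · rw [erase_eq_of_notMem h, p.card_set, add_zero]
  rw [card_eq_sum_card_fiber (restrictLeaf G v), Nat.card_eq_fintype_card (α := {p // _}),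
    Fintype.card_subtype, card_filter, ← sum_add_distrib]
  simp_rw [Nat.card_congr (restrictLeafFiberEquiv G v _), Nat.card_eq_fintype_card,
    Fintype.card_coe, hsum]
  rw [sum_const, card_univ, smul_eq_mul, mul_comm]

theorem csf_attachClique_succ (s : ℕ) :
    csf (G.attachClique v (s + 1)) =
      ((s : ℚ) + 1) • csf ((G.addLeaf v).attachClique none s) -
        ((s : ℚ) * (s + 1).factorial) • (esymm (s + 1) * csf G) := by
  refine MvPowerSeries.ext fun d => ?_
  have hclique := card_colorings_attachClique G v (s + 1) d
  have hclique' := card_colorings_attachClique (G.addLeaf v) none s d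
  have hleaf := card_addLeaf_notMem_add_card_mem G v s d
  have hsplit := ColoringWithSet.card_eq_card_notMem_add_card_mem (G := G) (j := s + 1) (d := d) v
  rw [map_sub, MvPowerSeries.coeff_smul, MvPowerSeries.coeff_smul, coeff_esymm_mul_csf]
  change (Nat.card (Colorings _ d) : ℚ) = _ * (Nat.card (Colorings _ d) : ℚ) - _
  rw [hclique, hclique', Nat.factorial_succ]
  qify at hleaf hsplit
  push_cast
  linear_combination (-((s : ℚ) + 1) * s.factorial) * (hleaf + hsplit)

end Counting

section Tail

open SimpleGraph

variable (H : PtGraph) (m : ℕ)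

/-- The vertex of the tail at distance `i` from the root; `inr t` is at distance `t + 1`. -/
def PtGraph.tailVertex : Fin (m + 1) → H.V ⊕ Fin m := Fin.cases (inl H.root) inr

def PtGraph.tailGraph : SimpleGraph (H.V ⊕ Fin m) :=
  H.graph.map inl ⊔ (pathGraph (m + 1)).map (H.tailVertex m)

@[simp] lemma PtGraph.tailVertex_zero : H.tailVertex m 0 = inl H.root := rfl

@[simp] lemma PtGraph.tailVertex_succ (t : Fin m) : H.tailVertex m t.succ = inr t := rfl

def PtGraph.extendTail : Option (H.V ⊕ Fin m) ≃ H.V ⊕ Fin (m + 1) where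
  toFun o := o.elim (inr (Fin.last m)) (Sum.map id Fin.castSucc)
  invFun := Sum.elim (some ∘ inl) (Fin.lastCases none (some ∘ inr))
  left_inv := by rintro (_ | a | t) <;> simp
  right_inv := by
    rintro (a | t)
    · rfl
    · induction t using Fin.lastCases <;> simp

lemma PtGraph.tailGraph_succ :
    ((H.tailGraph m).addLeaf (H.tailVertex m (Fin.last m))).map (H.extendTail m) =
      H.tailGraph (m + 1) := by
  have hpath :
      H.extendTail m ∘ some ∘ H.tailVertex m = H.tailVertex (m + 1) ∘ Fin.castSuccEmb := by
    funext i
    induction i using Fin.cases <;> simp [extendTail]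
  have hlast : H.extendTail m none = H.tailVertex (m + 1) (Fin.last (m + 1)) := by
    rw [← Fin.succ_last]; rfl
  have hend : H.extendTail m (some (H.tailVertex m (Fin.last m))) =
      H.tailVertex (m + 1) (Fin.last m).castSucc := congrFun hpath (Fin.last m)
  have hinl : H.extendTail m ∘ some ∘ inl = inl := rfl
  simp only [addLeaf, tailGraph, SimpleGraph.map_sup, SimpleGraph.map_map, map_edge, hinl, hpath,
    hend, hlast, pathGraph_succ, sup_assoc]

theorem csf_tailGraph_attachClique (s k : ℕ) :
    csf ((H.tailGraph k).attachClique (H.tailVertex k (Fin.last k)) s) =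
      (s.factorial : ℚ) • ∑ l ∈ Finset.range (s + 1),
        (1 - (l : ℚ)) • (esymm l * csf (H.tailGraph (k + s - l))) := by
  induction s generalizing k with
  | zero => simp [csf_attachClique_zero, esymm_zero]
  | succ s ih =>
    have hleaf : csf (((H.tailGraph k).addLeaf (H.tailVertex k (Fin.last k))).attachClique none s) =
        csf ((H.tailGraph (k + 1)).attachClique (H.tailVertex (k + 1) (Fin.last (k + 1))) s) := by
      rw [← csf_attachClique_map_equiv _ (H.extendTail k), H.tailGraph_succ]
      rfl
    rw [csf_attachClique_succ, hleaf, ih (k + 1), Finset.sum_range_succ _ (s + 1),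
      show k + 1 + s = k + (s + 1) by omega, Nat.add_sub_cancel, Nat.factorial_succ]
    push_cast
    module

end Tail

section Identification

open SimpleGraph Relation

variable (H : PtGraph)

lemma csf_tail (m : ℕ) : csf (H.tail m).graph = csf (H.tailGraph m) := by
  let f : H.V ⊕ (Fin (m + 1) ⊕ PUnit) → H.V ⊕ Fin m :=
    Sum.elim inl (Sum.elim (H.tailVertex m) fun _ => H.tailVertex m (Fin.last m))
  let s : H.V ⊕ Fin m → H.V ⊕ (Fin (m + 1) ⊕ PUnit) :=
    Sum.elim inl fun t => inr (inl t.succ)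
  have hr : ∀ x y, pcRel m H PtGraph.K1 x y → f x = f y := by
    rintro x y (⟨rfl, rfl⟩ | ⟨rfl, rfl⟩) <;> rfl
  have hpath (i : Fin (m + 1)) :
      EqvGen (pcRel m H PtGraph.K1) (inr (inl i)) (s (f (inr (inl i)))) := by
    induction i using Fin.cases with
    | zero => exact .symm _ _ (.rel _ _ (Or.inl ⟨rfl, rfl⟩))
    | succ t => exact .refl _
  have hmap : (disjSum H.graph (disjSum (pathGraph (m + 1)) PtGraph.K1.graph)).map f =
      H.tailGraph m := by
    simp only [disjSum_eq_sup, SimpleGraph.map_sup, SimpleGraph.map_map, PtGraph.K1,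
      SimpleGraph.map_bot, sup_bot_eq]
    rfl
  refine (csf_glue _ _ f s (by rintro (a | t) <;> rfl) hr ?_).trans (congrArg csf hmap)
  rintro (a | i | u)
  · exact .refl _
  · exact hpath i
  · exact .trans _ _ _ (.symm _ _ (.rel _ _ (Or.inr ⟨rfl, rfl⟩))) (hpath (Fin.last m))

lemma csf_pathConjoin_ptClique (k g : ℕ) :
    csf (pathConjoin k (ptClique g) H).graph =
      csf ((H.tailGraph k).attachClique (H.tailVertex k (Fin.last k)) (g - 1)) := by
  -- The path of `P^k(K_g, H)` runs from the clique to `H`, the tail from `H` outwards.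
  let f : (ptClique g).V ⊕ (Fin (k + 1) ⊕ H.V) → (H.V ⊕ Fin k) ⊕ Fin (g - 1) :=
    Sum.elim (fun o => Option.elim o (inl (H.tailVertex k (Fin.last k))) inr)
      (Sum.elim (inl ∘ H.tailVertex k ∘ Fin.rev) (inl ∘ inl))
  let s : (H.V ⊕ Fin k) ⊕ Fin (g - 1) → (ptClique g).V ⊕ (Fin (k + 1) ⊕ H.V) :=
    Sum.elim (Sum.elim (inr ∘ inr) fun t => inr (inl t.succ.rev)) (inl ∘ some)
  have hr : ∀ x y, pcRel k (ptClique g) H x y → f x = f y := by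
    rintro x y (⟨rfl, rfl⟩ | ⟨rfl, rfl⟩) <;> simp [f, ptClique]
  have hpath (i : Fin (k + 1)) :
      EqvGen (pcRel k (ptClique g) H) (inr (inl i)) (s (f (inr (inl i)))) := by
    obtain ⟨j, rfl⟩ := Fin.rev_surjective i
    induction j using Fin.cases with
    | zero => exact .rel _ _ (Or.inr ⟨by rw [Fin.rev_zero], by simp [f, s]⟩)
    | succ t => simpa [f, s] using .refl _
  have hmap : (disjSum (ptClique g).graph (disjSum (pathGraph (k + 1)) H.graph)).map f =
      (H.tailGraph k).attachClique (H.tailVertex k (Fin.last k)) (g - 1) := by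
    simp only [disjSum_eq_sup, attachClique, PtGraph.tailGraph, SimpleGraph.map_sup,
      SimpleGraph.map_map]
    rw [show f ∘ inr ∘ inl = (inl ∘ H.tailVertex k) ∘ Fin.rev from rfl,
      ← SimpleGraph.map_map (pathGraph (k + 1)) Fin.rev,
      pathGraph_map_rev, sup_comm, sup_comm (SimpleGraph.map _ (pathGraph (k + 1)))]
    rfl
  refine (csf_glue _ _ f s ?_ hr ?_).trans (congrArg csf hmap)
  · rintro ((a | t) | j)
    · rfl
    · simp [f, s]
    · rfl
  · rintro ((_ | j) | i | a)
    · exact .trans _ _ _ (.rel _ _ (Or.inl ⟨rfl, rfl⟩))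
        (hr _ _ (Or.inl ⟨rfl, rfl⟩) ▸ hpath 0)
    · exact .refl _
    · exact hpath i
    · exact .refl _

end Identification

/-- KPGs: for a rooted finite graph `H`, `k ≥ 0` and `g ≥ 1`,
`X_{P^k(K_g, H)} = (g-1)! · ∑_{l=0}^{g-1} (1-l) e_l X_{H^{k+g-1-l}}`. -/
theorem statement2 (H : PtGraph) (k g : ℕ) (hg : 1 ≤ g) :
    csf (pathConjoin k (ptClique g) H).graph =
      (Nat.factorial (g - 1) : ℚ) •
        ∑ l ∈ Finset.range g,
          (1 - (l : ℚ)) • (esymm l * csf (H.tail (k + g - 1 - l)).graph) := by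
  obtain ⟨s, rfl⟩ : ∃ s, g = s + 1 := ⟨g - 1, by omega⟩
  rw [csf_pathConjoin_ptClique, Nat.add_sub_cancel, csf_tailGraph_attachClique]
  refine congrArg _ (Finset.sum_congr rfl fun l _ => ?_)
  rw [csf_tail, show k + (s + 1) - 1 - l = k + s - l by omega]

end
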